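/- Let Γ be a finite subgroup of SL₂(ℂ), ρ : Γ → GL(ℂ²) the natural (inclusion) representation, and χᵢ an irreducible complex character of Γ. Then in ℂ⟦t⟧ one has Σₙ mᵢ(n)·tⁿ = (1/|Γ|)·Σ_{g∈Γ} conj(χᵢ(g))·(1 − tr(g)·t + t²)⁻¹, where mᵢ(n) is the multiplicity of χᵢ in Symⁿ(ρ) and (1 − tr(g)t + t²)⁻¹ denotes the multiplicative inverse of the polynomial 1 − tr(g)t + t² in ℂ⟦t⟧ (which exists since its constant term is 1). -/

import Mathlib

open Matrix Complex PowerSeries CategoryTheory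

/-- The `k`-th column image polynomial used to define the symmetric power:
the image of the basis vector `e₁^k e₂^(n-k)` of `Symⁿ(ℂ²)` under the endomorphism
induced by `g`, written as a polynomial in `X 0 ↔ e₁`, `X 1 ↔ e₂`. -/
noncomputable def symPoly2 (n : ℕ) (g : Matrix (Fin 2) (Fin 2) ℂ) (k : Fin (n + 1)) :
    MvPolynomial (Fin 2) ℂ :=
  (MvPolynomial.C (g 0 0) * MvPolynomial.X 0 + MvPolynomial.C (g 1 0) * MvPolynomial.X 1) ^ (k : ℕ) *
  (MvPolynomial.C (g 0 1) * MvPolynomial.X 0 + MvPolynomial.C (g 1 1) * MvPolynomial.X 1) ^ (n - (k : ℕ))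

/-- The matrix of the endomorphism `Symⁿ(g)` induced by `g` on the `n`-th symmetric power
of `ℂ²`, in the basis of monomials `e₁^i e₂^(n-i)`, `i = 0, …, n`. -/
noncomputable def symMatrix2 (n : ℕ) (g : Matrix (Fin 2) (Fin 2) ℂ) :
    Matrix (Fin (n + 1)) (Fin (n + 1)) ℂ :=
  Matrix.of fun i k =>
    MvPolynomial.coeff (Finsupp.single 0 (i : ℕ) + Finsupp.single 1 (n - (i : ℕ)))
      (symPoly2 n g k)

/-- The multiplicity of the character `χ` in the `n`-th symmetric power of the natural
representation of `Γ ⊆ SL₂(ℂ)`: the inner product `(1/|Γ|)·Σ_{g∈Γ} χ_{Symⁿ}(g)·conj(χ(g))`. -/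
noncomputable def symMult2 (Γ : Subgroup (SpecialLinearGroup (Fin 2) ℂ)) [Fintype Γ]
    (χ : Γ → ℂ) (n : ℕ) : ℂ :=
  (Fintype.card Γ : ℂ)⁻¹ * ∑ g : Γ, (symMatrix2 n g.1.1).trace * (starRingEnd ℂ) (χ g)

/-!
Write `g e₁ = a e₁ + c e₂`, `g e₂ = b e₁ + d e₂`. The diagonal entries of `Symⁿ(g)` are
coefficients of `(a x + c y)^k (b x + d y)^(n-k)`; peeling off one linear factor gives
first-order recursions in `n` for these coefficients, which combine to the Cayley–Hamilton
type recurrence `tr Symⁿ⁺²(g) = tr g · tr Symⁿ⁺¹(g) - det g · tr Symⁿ(g)`. For `det g = 1`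
this says exactly that `Σₙ tr Symⁿ(g) tⁿ` inverts `1 - tr(g) t + t²`, and the theorem follows
coefficientwise.
-/

namespace SymPowTwo

variable {R : Type*} [CommRing R]

noncomputable def linForm (a c : R) : MvPolynomial (Fin 2) R :=
  MvPolynomial.C a * MvPolynomial.X 0 + MvPolynomial.C c * MvPolynomial.X 1

/-- The exponent of `x^i y^j`, where `x = X 0` and `y = X 1`. -/
noncomputable def monExp (i j : ℕ) : Fin 2 →₀ ℕ :=
  Finsupp.single 0 i + Finsupp.single 1 j

@[simp]
lemma monExp_apply_zero (i j : ℕ) : monExp i j 0 = i := by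
  simp [monExp]

@[simp]
lemma monExp_apply_one (i j : ℕ) : monExp i j 1 = j := by
  simp [monExp]

lemma degree_monExp (i j : ℕ) : (monExp i j).degree = i + j := by
  simp [monExp, map_add, Finsupp.degree_single]

lemma monExp_succ_left_sub (i j : ℕ) : monExp (i + 1) j - Finsupp.single 0 1 = monExp i j := by
  ext x; fin_cases x <;> simp [monExp]

lemma monExp_succ_right_sub (i j : ℕ) : monExp i (j + 1) - Finsupp.single 1 1 = monExp i j := by
  ext x; fin_cases x <;> simp [monExp]

lemma coeff_linForm_mul (a c : R) (p : MvPolynomial (Fin 2) R) (i j : ℕ) :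
    (linForm a c * p).coeff (monExp i j) =
      (if 0 < i then a * p.coeff (monExp (i - 1) j) else 0) +
        (if 0 < j then c * p.coeff (monExp i (j - 1)) else 0) := by
  simp only [linForm, add_mul, MvPolynomial.coeff_add, MvPolynomial.C_mul_X_eq_monomial,
    MvPolynomial.coeff_monomial_mul', Finsupp.single_le_iff, monExp_apply_zero,
    monExp_apply_one, Nat.one_le_iff_ne_zero, pos_iff_ne_zero]
  congr 1
  · split_ifs with hi
    · obtain ⟨i, rfl⟩ := Nat.exists_eq_succ_of_ne_zero hi
      rw [monExp_succ_left_sub, Nat.succ_sub_one]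
    · rfl
  · split_ifs with hj
    · obtain ⟨j, rfl⟩ := Nat.exists_eq_succ_of_ne_zero hj
      rw [monExp_succ_right_sub, Nat.succ_sub_one]
    · rfl

lemma isHomogeneous_linForm (a c : R) : (linForm a c).IsHomogeneous 1 :=
  ((MvPolynomial.isHomogeneous_C_mul_X a 0).add (MvPolynomial.isHomogeneous_C_mul_X c 1))

variable (g : Matrix (Fin 2) (Fin 2) R)

/-- The image of `x^k y^(n-k)` under `Symⁿ(g)`, for `k : ℕ` rather than `k : Fin (n + 1)`. -/
noncomputable def symCol (n k : ℕ) : MvPolynomial (Fin 2) R :=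
  linForm (g 0 0) (g 1 0) ^ k * linForm (g 0 1) (g 1 1) ^ (n - k)

/-- The `(i, k)` entry of `Symⁿ(g)`, extended by `0` to `i > n`. -/
noncomputable def symEntry (n i k : ℕ) : R :=
  (symCol g n k).coeff (monExp i (n - i))

noncomputable def symTrace (n : ℕ) : R :=
  ∑ i ∈ Finset.range (n + 1), symEntry g n i i

noncomputable def symSubdiagSum (n : ℕ) : R :=
  ∑ i ∈ Finset.range (n + 1), symEntry g n (i + 1) i

lemma isHomogeneous_symCol {n k : ℕ} (hk : k ≤ n) : (symCol g n k).IsHomogeneous n := by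
  have h := ((isHomogeneous_linForm (g 0 0) (g 1 0)).pow k).mul
    ((isHomogeneous_linForm (g 0 1) (g 1 1)).pow (n - k))
  rwa [one_mul, one_mul, Nat.add_sub_cancel' hk] at h

lemma symEntry_eq_zero {n i k : ℕ} (hk : k ≤ n) (hi : n < i) : symEntry g n i k = 0 :=
  (isHomogeneous_symCol g hk).coeff_eq_zero (by rw [degree_monExp]; omega)

lemma symCol_succ_succ (n k : ℕ) :
    symCol g (n + 1) (k + 1) = linForm (g 0 0) (g 1 0) * symCol g n k := by
  rw [symCol, symCol, Nat.add_sub_add_right, pow_succ']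
  ring

lemma symCol_succ_left {n k : ℕ} (hk : k ≤ n) :
    symCol g (n + 1) k = linForm (g 0 1) (g 1 1) * symCol g n k := by
  rw [symCol, symCol, Nat.sub_add_comm hk, pow_succ]
  ring

lemma coeff_linForm_mul_symCol {n k : ℕ} (hk : k ≤ n) (u v : R) (i : ℕ) :
    (linForm u v * symCol g n k).coeff (monExp (i + 1) (n + 1 - (i + 1))) =
      u * symEntry g n i k + v * symEntry g n (i + 1) k := by
  rw [coeff_linForm_mul, if_pos i.succ_pos, Nat.add_sub_cancel, Nat.add_sub_add_right]
  rcases lt_or_ge i n with hin | hin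
  · rw [if_pos (by omega), symEntry, symEntry, Nat.sub_sub]
  · rw [if_neg (by omega), symEntry_eq_zero g hk (Nat.lt_succ_of_le hin), symEntry]
    ring

lemma symEntry_succ_succ_succ {n k : ℕ} (hk : k ≤ n) (i : ℕ) :
    symEntry g (n + 1) (i + 1) (k + 1) =
      g 0 0 * symEntry g n i k + g 1 0 * symEntry g n (i + 1) k := by
  rw [symEntry, symCol_succ_succ, coeff_linForm_mul_symCol g hk]

lemma symEntry_succ_succ_left {n k : ℕ} (hk : k ≤ n) (i : ℕ) :
    symEntry g (n + 1) (i + 1) k =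
      g 0 1 * symEntry g n i k + g 1 1 * symEntry g n (i + 1) k := by
  rw [symEntry, symCol_succ_left g hk, coeff_linForm_mul_symCol g hk]

lemma symEntry_succ_zero_zero (n : ℕ) : symEntry g (n + 1) 0 0 = g 1 1 * symEntry g n 0 0 := by
  simp [symEntry, symCol_succ_left g n.zero_le, coeff_linForm_mul]

lemma symEntry_zero_zero_zero : symEntry g 0 0 0 = 1 := by
  simp [symEntry, symCol, monExp]

lemma symTrace_succ (n : ℕ) :
    symTrace g (n + 1) =
      g 1 1 * symEntry g n 0 0 + g 0 0 * symTrace g n + g 1 0 * symSubdiagSum g n := by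
  rw [symTrace, Finset.sum_range_succ', symEntry_succ_zero_zero, symTrace, symSubdiagSum,
    Finset.mul_sum, Finset.mul_sum, Finset.sum_congr rfl fun i hi =>
      symEntry_succ_succ_succ g (Finset.mem_range_succ_iff.mp hi) i, Finset.sum_add_distrib]
  ring

lemma symSubdiagSum_succ (n : ℕ) :
    symSubdiagSum g (n + 1) = g 0 1 * symTrace g n + g 1 1 * symSubdiagSum g n := by
  rw [symSubdiagSum, Finset.sum_range_succ, symEntry_eq_zero g le_rfl (by omega), add_zero,
    symTrace, symSubdiagSum, Finset.mul_sum, Finset.mul_sum, ← Finset.sum_add_distrib]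
  exact Finset.sum_congr rfl fun i hi =>
    symEntry_succ_succ_left g (Finset.mem_range_succ_iff.mp hi) i

lemma symTrace_zero : symTrace g 0 = 1 := by
  rw [symTrace, Finset.sum_range_one, symEntry_zero_zero_zero]

lemma symTrace_one : symTrace g 1 = g.trace := by
  have hsub : symSubdiagSum g 0 = 0 := by
    rw [symSubdiagSum, Finset.sum_range_one]
    exact symEntry_eq_zero g le_rfl zero_lt_one
  rw [symTrace_succ, symTrace_zero, hsub, symEntry_zero_zero_zero, trace_fin_two]
  ring

lemma symTrace_add_two (n : ℕ) :
    symTrace g (n + 2) = g.trace * symTrace g (n + 1) - g.det * symTrace g n := by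
  rw [trace_fin_two, det_fin_two]
  linear_combination symTrace_succ g (n + 1) + g 1 1 * symEntry_succ_zero_zero g n +
    g 1 0 * symSubdiagSum_succ g n - g 1 1 * symTrace_succ g n

end SymPowTwo

lemma PowerSeries.mk_mul_eq_one_of_recurrence {R : Type*} [CommRing R] (s : ℕ → R) (τ δ : R)
    (h0 : s 0 = 1) (h1 : s 1 = τ) (hrec : ∀ n, s (n + 2) = τ * s (n + 1) - δ * s n) :
    PowerSeries.mk s * (1 - C τ * X + C δ * X ^ 2) = 1 := by
  ext (_ | _ | n) <;> simp [mul_add, mul_sub, mul_left_comm _ (C _), coeff_mul_X_pow', h0, h1, hrec]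

lemma trace_symMatrix2 (n : ℕ) (g : Matrix (Fin 2) (Fin 2) ℂ) :
    (symMatrix2 n g).trace = SymPowTwo.symTrace g n := by
  rw [Matrix.trace, SymPowTwo.symTrace, ← Fin.sum_univ_eq_sum_range]
  rfl

lemma inv_one_sub_trace_mul_X_add_X_sq (g : SpecialLinearGroup (Fin 2) ℂ) :
    (1 - C (Matrix.trace g.1) * X + X ^ 2)⁻¹ =
      PowerSeries.mk fun n => (symMatrix2 n g.1).trace := by
  have h := PowerSeries.mk_mul_eq_one_of_recurrence _ _ _ (SymPowTwo.symTrace_zero g.1)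
    (SymPowTwo.symTrace_one g.1) (SymPowTwo.symTrace_add_two g.1)
  rw [g.2, map_one, one_mul] at h
  rw [eq_comm, PowerSeries.eq_inv_iff_mul_eq_one (by simp)]
  simpa only [trace_symMatrix2] using h

theorem sl2_multiplicity_series_formula_general
    (Γ : Subgroup (SpecialLinearGroup (Fin 2) ℂ)) [Fintype Γ]
    (V : FDRep ℂ Γ) :
    PowerSeries.mk (fun n => symMult2 Γ V.character n) =
      (Fintype.card Γ : ℂ)⁻¹ •
        ∑ g : Γ, PowerSeries.C ((starRingEnd ℂ) (V.character g)) *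
          (1 - PowerSeries.C (Matrix.trace g.1.1) * PowerSeries.X + PowerSeries.X ^ 2)⁻¹ := by
  ext n
  simp only [coeff_mk, coeff_smul, smul_eq_mul, map_sum, symMult2, coeff_C_mul,
    inv_one_sub_trace_mul_X_add_X_sq]
  exact congrArg _ (Finset.sum_congr rfl fun g _ => mul_comm _ _)

/-- For a finite subgroup `Γ` of `SL₂(ℂ)` and an irreducible complex character `χᵢ` of `Γ`,
`Σₙ mᵢ(n)·tⁿ = (1/|Γ|)·Σ_{g∈Γ} conj(χᵢ(g))·(1 − tr(g)·t + t²)⁻¹` in `ℂ⟦t⟧`. -/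
theorem sl2_multiplicity_series_formula
    (Γ : Subgroup (SpecialLinearGroup (Fin 2) ℂ)) [Fintype Γ]
    (V : FDRep ℂ Γ) (hV : Simple V) :
    PowerSeries.mk (fun n => symMult2 Γ V.character n) =
      (Fintype.card Γ : ℂ)⁻¹ •
        ∑ g : Γ, PowerSeries.C ((starRingEnd ℂ) (V.character g)) *
          (1 - PowerSeries.C (Matrix.trace g.1.1) * PowerSeries.X + PowerSeries.X ^ 2)⁻¹ :=
  sl2_multiplicity_series_formula_general Γ V
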